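/- arXiv:2311.04256 — 5 statements merged into one kernel-verified Lean document; each statement's English description precedes it below -/
import Mathlib

section
/- For hesitant fuzzy elements A and B, the mean of the Torra intersection A ∩ B is at most max(mean A, mean B); i.e., at least one of (A ∩ B) ⊂_m A and (A ∩ B) ⊂_m B holds. -/
/-- Supremum (maximum) of a multiset of reals in `[0,1]`, defaulting to `0`. -/
noncomputable def msup (A : Multiset ℝ) : ℝ := A.toList.foldr max 0

/-- Infimum (minimum) of a multiset of reals in `[0,1]`, defaulting to `1`. -/
noncomputable def minf (A : Multiset ℝ) : ℝ := A.toList.foldr min 1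

/-- Mean of a multiset of reals. -/
noncomputable def mmean (A : Multiset ℝ) : ℝ := A.sum / A.card

/-- The elements of a multiset sorted in descending order. -/
noncomputable def dsort (A : Multiset ℝ) : List ℝ := (A.sort (· ≤ ·)).reverse

/-- `A ⊂ₛ B`: `|A| ≥ |B|` and the `i`-th largest element of `B` is at least the
`i`-th largest element of `A`, for `i ≤ |B|`. -/
noncomputable def subS (A B : Multiset ℝ) : Prop :=
  B.card ≤ A.card ∧ ∀ i < B.card, (dsort A).getD i 0 ≤ (dsort B).getD i 0

/-- `A ⊂ₜ B`: `|A| < |B|` and the `i`-th largest element of `B` is at least the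
`i`-th largest element of `A`, for `i ≤ |A|`. -/
noncomputable def subT (A B : Multiset ℝ) : Prop :=
  A.card < B.card ∧ ∀ i < A.card, (dsort A).getD i 0 ≤ (dsort B).getD i 0

/-- Torra intersection of two hesitant fuzzy elements (as multisets). -/
noncomputable def tInter (A B : Multiset ℝ) : Multiset ℝ :=
  (A + B).filter (fun h => h ≤ min (msup A) (msup B))

/-- Torra union of two hesitant fuzzy elements (as multisets). -/
noncomputable def tUnion (A B : Multiset ℝ) : Multiset ℝ :=
  (A + B).filter (fun h => max (minf A) (minf B) ≤ h)

lemma aux_le_foldr : ∀ (l : List ℝ) (x : ℝ), x ∈ l → x ≤ l.foldr max 0 := by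
  intro l
  induction l with
  | nil => simp
  | cons a t ih =>
    intro x hx
    rcases List.mem_cons.mp hx with rfl | hx
    · exact le_max_left _ _
    · exact le_trans (ih x hx) (le_max_right _ _)

lemma le_msup {A : Multiset ℝ} {x : ℝ} (hx : x ∈ A) : x ≤ msup A :=
  aux_le_foldr _ _ ((Multiset.mem_toList).mpr hx)

lemma card_pos' {A : Multiset ℝ} (h : A ≠ 0) : (0:ℝ) < (A.card : ℝ) := by
  have := Multiset.card_pos.mpr h
  exact_mod_cast this

lemma mmean_le_of_forall {A : Multiset ℝ} {c : ℝ} (hA : A ≠ 0) (h : ∀ x ∈ A, x ≤ c) :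
    mmean A ≤ c := by
  have hc := card_pos' hA
  rw [mmean, div_le_iff₀ hc]
  have := Multiset.sum_le_card_nsmul A c h
  simpa [nsmul_eq_mul, mul_comm] using this

lemma mmean_add_le_max {X Y : Multiset ℝ} (hX : X ≠ 0) (hY : Y ≠ 0) :
    mmean (X + Y) ≤ max (mmean X) (mmean Y) := by
  set c := max (mmean X) (mmean Y) with hc
  have hcx := card_pos' hX
  have hcy := card_pos' hY
  have h1 : X.sum ≤ c * X.card := by
    have : mmean X ≤ c := le_max_left _ _
    rwa [mmean, div_le_iff₀ hcx] at this
  have h2 : Y.sum ≤ c * Y.card := by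
    have : mmean Y ≤ c := le_max_right _ _
    rwa [mmean, div_le_iff₀ hcy] at this
  rw [mmean, Multiset.sum_add, Multiset.card_add, div_le_iff₀ (by push_cast; linarith)]
  push_cast
  nlinarith

lemma mmean_filter_le {B : Multiset ℝ} {m : ℝ}
    (hne : B.filter (fun h => h ≤ m) ≠ 0) :
    mmean (B.filter (fun h => h ≤ m)) ≤ mmean B := by
  set B' := B.filter (fun h => h ≤ m) with hB'
  set B'' := B.filter (fun h => ¬ h ≤ m) with hB''
  have hsplit : B' + B'' = B := Multiset.filter_add_not _ B
  set μ := mmean B' with hμ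
  have hμm : μ ≤ m := mmean_le_of_forall hne (fun x hx => (Multiset.mem_filter.mp hx).2)
  have hB'sum : B'.sum = μ * B'.card := by
    rw [hμ, mmean, div_mul_cancel₀]
    exact (card_pos' hne).ne'
  have hB''sum : (B''.card : ℝ) * μ ≤ B''.sum := by
    have := Multiset.card_nsmul_le_sum (s := B'')
      (fun x hx => le_trans hμm (le_of_lt (not_le.mp (Multiset.mem_filter.mp hx).2)))
    simpa [nsmul_eq_mul] using this
  have hBne : B ≠ 0 := by
    intro h; apply hne; rw [hB', h, Multiset.filter_zero]
  have hcB := card_pos' hBne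
  rw [show mmean B = B.sum / B.card from rfl, le_div_iff₀ hcB]
  have hsum : B.sum = B'.sum + B''.sum := by rw [← hsplit, Multiset.sum_add]
  have hcard : (B.card : ℝ) = B'.card + B''.card := by
    rw [← hsplit]; push_cast [Multiset.card_add]; ring
  rw [hsum, hcard, hB'sum]
  nlinarith

lemma tInter_comm (A B : Multiset ℝ) : tInter A B = tInter B A := by
  unfold tInter
  rw [add_comm, min_comm]

lemma key (A B : Multiset ℝ) (hA : A ≠ 0) (hle : msup A ≤ msup B) :
    mmean (tInter A B) ≤ max (mmean A) (mmean B) := by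
  have hmin : min (msup A) (msup B) = msup A := min_eq_left hle
  have hfA : A.filter (fun h => h ≤ msup A) = A :=
    Multiset.filter_eq_self.mpr (fun x hx => le_msup hx)
  have hsplit : tInter A B = A + B.filter (fun h => h ≤ msup A) := by
    unfold tInter
    rw [hmin, Multiset.filter_add, hfA]
  rw [hsplit]
  by_cases hB' : B.filter (fun h => h ≤ msup A) = 0
  · rw [hB', add_zero]
    exact le_max_left _ _
  · calc mmean (A + B.filter (fun h => h ≤ msup A))
        ≤ max (mmean A) (mmean (B.filter (fun h => h ≤ msup A))) :=
          mmean_add_le_max hA hB'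
      _ ≤ max (mmean A) (mmean B) :=
          max_le_max le_rfl (mmean_filter_le hB')

theorem stmt6 (A B : Multiset ℝ) (hA : A ≠ 0) (hB : B ≠ 0)
    (hA1 : ∀ x ∈ A, x ∈ Set.Icc (0:ℝ) 1) (hB1 : ∀ x ∈ B, x ∈ Set.Icc (0:ℝ) 1) :
    mmean (tInter A B) ≤ max (mmean A) (mmean B) := by
  rcases le_total (msup A) (msup B) with h | h
  · exact key A B hA h
  · rw [tInter_comm, max_comm]
    exact key B A hB h
end

section
/- For hesitant fuzzy elements A and B, the mean of the Torra union A ∪ B is at least min(mean A, mean B); i.e., at least one of A ⊂_m (A ∪ B) and B ⊂_m (A ∪ B) holds. -/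
lemma foldr_min_le {l : List ℝ} {x : ℝ} (hx : x ∈ l) : l.foldr min 1 ≤ x := by
  induction l with
  | nil => cases hx
  | cons a t ih =>
    rcases List.mem_cons.1 hx with h | h
    · subst h; exact min_le_left _ _
    · exact le_trans (min_le_right _ _) (ih h)

lemma minf_le {A : Multiset ℝ} {x : ℝ} (hx : x ∈ A) : minf A ≤ x :=
  foldr_min_le (Multiset.mem_toList.2 hx)

lemma sum_le_card_mul {S : Multiset ℝ} {m : ℝ} (h : ∀ x ∈ S, x ≤ m) :
    S.sum ≤ S.card * m := by
  induction S using Multiset.induction with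
  | empty => simp
  | cons a s ih =>
    simp only [Multiset.sum_cons, Multiset.card_cons]
    push_cast
    have := ih (fun x hx => h x (Multiset.mem_cons_of_mem hx))
    have := h a (Multiset.mem_cons_self a s)
    nlinarith

lemma card_mul_le_sum {S : Multiset ℝ} {m : ℝ} (h : ∀ x ∈ S, m ≤ x) :
    S.card * m ≤ S.sum := by
  induction S using Multiset.induction with
  | empty => simp
  | cons a s ih =>
    simp only [Multiset.sum_cons, Multiset.card_cons]
    push_cast
    have := ih (fun x hx => h x (Multiset.mem_cons_of_mem hx))
    have := h a (Multiset.mem_cons_self a s)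
    nlinarith

lemma mmean_add_ge {P Q : Multiset ℝ} (hP : P ≠ 0) (hQ : Q ≠ 0) :
    min (mmean P) (mmean Q) ≤ mmean (P + Q) := by
  have hp : (0:ℝ) < P.card := by
    exact_mod_cast Multiset.card_pos.2 hP
  have hq : (0:ℝ) < Q.card := by
    exact_mod_cast Multiset.card_pos.2 hQ
  set μ := min (mmean P) (mmean Q) with hμ
  have h1 : (P.card : ℝ) * μ ≤ P.sum := by
    have : μ ≤ mmean P := min_le_left _ _
    rw [mmean, le_div_iff₀ hp] at this
    linarith
  have h2 : (Q.card : ℝ) * μ ≤ Q.sum := by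
    have : μ ≤ mmean Q := min_le_right _ _
    rw [mmean, le_div_iff₀ hq] at this
    linarith
  rw [mmean, Multiset.sum_add, Multiset.card_add, le_div_iff₀ (by push_cast; linarith)]
  push_cast
  nlinarith

lemma mmean_filter_ge (S : Multiset ℝ) (m : ℝ)
    (h : S.filter (fun x => m ≤ x) ≠ 0) :
    mmean S ≤ mmean (S.filter (fun x => m ≤ x)) := by
  set P := S.filter (fun x => m ≤ x) with hP
  set Q := S.filter (fun x => ¬ m ≤ x) with hQ
  have hSplit : P + Q = S := Multiset.filter_add_not _ S
  have hp : (0:ℝ) < P.card := by exact_mod_cast Multiset.card_pos.2 h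
  have hq : (0:ℝ) ≤ Q.card := by positivity
  have h1 : (P.card : ℝ) * m ≤ P.sum :=
    card_mul_le_sum (fun x hx => (Multiset.of_mem_filter hx))
  have h2 : Q.sum ≤ (Q.card : ℝ) * m :=
    sum_le_card_mul (fun x hx => by
      rw [hQ, Multiset.mem_filter] at hx
      exact le_of_not_ge hx.2)
  have hSsum : S.sum = P.sum + Q.sum := by rw [← hSplit, Multiset.sum_add]
  have hScard : (S.card : ℝ) = P.card + Q.card := by
    rw [← hSplit, Multiset.card_add]; push_cast; ring
  rw [mmean, mmean, hSsum, hScard, div_le_div_iff₀ (by linarith) hp]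
  nlinarith

lemma tUnion_comm (A B : Multiset ℝ) : tUnion A B = tUnion B A := by
  unfold tUnion
  rw [add_comm, max_comm]

lemma key_s7 (A B : Multiset ℝ) (hB : B ≠ 0) (hle : minf A ≤ minf B) :
    min (mmean A) (mmean B) ≤ mmean (tUnion A B) := by
  have hm : max (minf A) (minf B) = minf B := max_eq_right hle
  have hU : tUnion A B = A.filter (fun x => minf B ≤ x) + B := by
    unfold tUnion
    rw [hm, Multiset.filter_add]
    congr 1
    exact Multiset.filter_eq_self.2 (fun x hx => minf_le hx)
  by_cases hA' : A.filter (fun x => minf B ≤ x) = 0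
  · rw [hU, hA', zero_add]
    exact min_le_right _ _
  · calc min (mmean A) (mmean B)
        ≤ min (mmean (A.filter (fun x => minf B ≤ x))) (mmean B) := by
          exact min_le_min (mmean_filter_ge A (minf B) hA') le_rfl
      _ ≤ mmean (tUnion A B) := by rw [hU]; exact mmean_add_ge hA' hB

theorem stmt7 (A B : Multiset ℝ) (hA : A ≠ 0) (hB : B ≠ 0)
    (hA1 : ∀ x ∈ A, x ∈ Set.Icc (0:ℝ) 1) (hB1 : ∀ x ∈ B, x ∈ Set.Icc (0:ℝ) 1) :
    min (mmean A) (mmean B) ≤ mmean (tUnion A B) := by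
  rcases le_total (minf A) (minf B) with h | h
  · exact key_s7 A B hB h
  · rw [tUnion_comm, min_comm]
    exact key_s7 B A hA h
end

section
/- For hesitant fuzzy elements A and B, the mean of the Torra intersection A ∩ B is at most the mean of the Torra union A ∪ B. -/
lemma foldr_max_ub (l : List ℝ) : ∀ x ∈ l, x ≤ l.foldr max 0 := by
  induction l with
  | nil => simp
  | cons a t ih =>
    intro x hx
    rcases List.mem_cons.mp hx with h | h
    · simp [h, le_max_left]
    · exact le_trans (ih x h) (le_max_right _ _)

lemma foldr_max_mem (l : List ℝ) (h0 : ∀ x ∈ l, 0 ≤ x) (hl : l ≠ []) :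
    l.foldr max 0 ∈ l := by
  induction l with
  | nil => exact absurd rfl hl
  | cons a t ih =>
    by_cases ht : t = []
    · subst ht
      simp [max_eq_left (h0 a (by simp))]
    · have hm := ih (fun x hx => h0 x (List.mem_cons_of_mem _ hx)) ht
      rcases le_total (t.foldr max 0) a with h | h
      · simp [List.foldr_cons, max_eq_left h]
      · simp [List.foldr_cons, max_eq_right h, hm]

lemma foldr_min_lb (l : List ℝ) : ∀ x ∈ l, l.foldr min 1 ≤ x := by
  induction l with
  | nil => simp
  | cons a t ih =>
    intro x hx
    rcases List.mem_cons.mp hx with h | h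
    · simp [h, min_le_left]
    · exact le_trans (min_le_right _ _) (ih x h)

lemma foldr_min_mem (l : List ℝ) (h1 : ∀ x ∈ l, x ≤ 1) (hl : l ≠ []) :
    l.foldr min 1 ∈ l := by
  induction l with
  | nil => exact absurd rfl hl
  | cons a t ih =>
    by_cases ht : t = []
    · subst ht
      simp [min_eq_left (h1 a (by simp))]
    · have hm := ih (fun x hx => h1 x (List.mem_cons_of_mem _ hx)) ht
      rcases le_total a (t.foldr min 1) with h | h
      · simp [List.foldr_cons, min_eq_left h]
      · simp [List.foldr_cons, min_eq_right h, hm]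

lemma msup_mem (A : Multiset ℝ) (hA : A ≠ 0) (h0 : ∀ x ∈ A, 0 ≤ x) : msup A ∈ A := by
  have hl : A.toList ≠ [] := by
    simp [Multiset.toList_eq_nil, hA]
  have := foldr_max_mem A.toList (fun x hx => h0 x (by rwa [Multiset.mem_toList] at hx)) hl
  rwa [Multiset.mem_toList] at this

lemma minf_mem (A : Multiset ℝ) (hA : A ≠ 0) (h1 : ∀ x ∈ A, x ≤ 1) : minf A ∈ A := by
  have hl : A.toList ≠ [] := by
    simp [Multiset.toList_eq_nil, hA]
  have := foldr_min_mem A.toList (fun x hx => h1 x (by rwa [Multiset.mem_toList] at hx)) hl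
  rwa [Multiset.mem_toList] at this

lemma mmean_le (T : Multiset ℝ) (c : ℝ) (hT : T ≠ 0) (h : ∀ x ∈ T, x ≤ c) :
    mmean T ≤ c := by
  have hcard : (0:ℝ) < T.card := by
    have := Multiset.card_pos.mpr hT
    exact_mod_cast this
  have hsum : T.sum ≤ T.card • c := Multiset.sum_le_card_nsmul T c h
  rw [nsmul_eq_mul] at hsum
  rw [mmean, div_le_iff₀ hcard]
  linarith [hsum]

lemma le_mmean (T : Multiset ℝ) (c : ℝ) (hT : T ≠ 0) (h : ∀ x ∈ T, c ≤ x) :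
    c ≤ mmean T := by
  have hcard : (0:ℝ) < T.card := by
    have := Multiset.card_pos.mpr hT
    exact_mod_cast this
  have hsum : T.card • c ≤ T.sum := Multiset.card_nsmul_le_sum h
  rw [nsmul_eq_mul] at hsum
  rw [mmean, le_div_iff₀ hcard]
  linarith [hsum]

lemma mmean_add_le (P Q : Multiset ℝ) (c : ℝ) (hP : P ≠ 0)
    (hQc : ∀ x ∈ Q, x ≤ c) (hcP : ∀ x ∈ P, c ≤ x) :
    mmean (P + Q) ≤ mmean P := by
  have hp : (0:ℝ) < P.card := by exact_mod_cast Multiset.card_pos.mpr hP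
  have hq : (0:ℝ) ≤ Q.card := by positivity
  have hsQ : Q.sum ≤ Q.card • c := Multiset.sum_le_card_nsmul Q c hQc
  have hsP : P.card • c ≤ P.sum := Multiset.card_nsmul_le_sum hcP
  rw [nsmul_eq_mul] at hsQ hsP
  rw [mmean, mmean, Multiset.sum_add, Multiset.card_add]
  push_cast
  rw [div_le_div_iff₀ (by linarith) hp]
  nlinarith [hsQ, hsP, hp, hq]

lemma le_mmean_add (P Q : Multiset ℝ) (c : ℝ) (hP : P ≠ 0)
    (hcQ : ∀ x ∈ Q, c ≤ x) (hPc : ∀ x ∈ P, x ≤ c) :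
    mmean P ≤ mmean (P + Q) := by
  have hp : (0:ℝ) < P.card := by exact_mod_cast Multiset.card_pos.mpr hP
  have hq : (0:ℝ) ≤ Q.card := by positivity
  have hsQ : Q.card • c ≤ Q.sum := Multiset.card_nsmul_le_sum hcQ
  have hsP : P.sum ≤ P.card • c := Multiset.sum_le_card_nsmul P c hPc
  rw [nsmul_eq_mul] at hsQ hsP
  rw [mmean, mmean, Multiset.sum_add, Multiset.card_add]
  push_cast
  rw [div_le_div_iff₀ hp (by linarith)]
  nlinarith [hsQ, hsP, hp, hq]

theorem stmt8 (A B : Multiset ℝ) (hA : A ≠ 0) (hB : B ≠ 0)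
    (hA1 : ∀ x ∈ A, x ∈ Set.Icc (0:ℝ) 1) (hB1 : ∀ x ∈ B, x ∈ Set.Icc (0:ℝ) 1) :
    mmean (tInter A B) ≤ mmean (tUnion A B) := by
  set m := min (msup A) (msup B) with hm
  set M := max (minf A) (minf B) with hM
  -- m is an element of A + B
  have hmAB : m ∈ A + B := by
    rcases le_total (msup A) (msup B) with h | h
    · rw [hm, min_eq_left h]
      exact Multiset.mem_add.mpr (Or.inl (msup_mem A hA (fun x hx => (hA1 x hx).1)))
    · rw [hm, min_eq_right h]
      exact Multiset.mem_add.mpr (Or.inr (msup_mem B hB (fun x hx => (hB1 x hx).1)))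
  have hMAB : M ∈ A + B := by
    rcases le_total (minf A) (minf B) with h | h
    · rw [hM, max_eq_right h]
      exact Multiset.mem_add.mpr (Or.inr (minf_mem B hB (fun x hx => (hB1 x hx).2)))
    · rw [hM, max_eq_left h]
      exact Multiset.mem_add.mpr (Or.inl (minf_mem A hA (fun x hx => (hA1 x hx).2)))
  have hmI : m ∈ tInter A B := Multiset.mem_filter.mpr ⟨hmAB, le_refl m⟩
  have hMU : M ∈ tUnion A B := Multiset.mem_filter.mpr ⟨hMAB, le_refl M⟩
  have hIne : tInter A B ≠ 0 := fun h => by simp [h] at hmI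
  have hUne : tUnion A B ≠ 0 := fun h => by simp [h] at hMU
  have hIle : ∀ x ∈ tInter A B, x ≤ m := fun x hx => (Multiset.mem_filter.mp hx).2
  have hUge : ∀ x ∈ tUnion A B, M ≤ x := fun x hx => (Multiset.mem_filter.mp hx).2
  rcases le_total m M with hcase | hcase
  · calc mmean (tInter A B) ≤ m := mmean_le _ m hIne hIle
      _ ≤ M := hcase
      _ ≤ mmean (tUnion A B) := le_mmean _ M hUne hUge
  · -- M ≤ m : middle part C
    set C := (tInter A B).filter (fun x => M ≤ x) with hC
    have hCeq : C = (tUnion A B).filter (fun x => x ≤ m) := by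
      rw [hC, tInter, tUnion, Multiset.filter_filter, Multiset.filter_filter]
      exact Multiset.filter_congr (fun x _ => by tauto)
    have hmC : m ∈ C := Multiset.mem_filter.mpr ⟨hmI, hcase⟩
    have hCne : C ≠ 0 := fun h => by simp [h] at hmC
    have h1 : mmean (tInter A B) ≤ mmean C := by
      have hsplit : C + (tInter A B).filter (fun x => ¬ M ≤ x) = tInter A B :=
        Multiset.filter_add_not _ _
      calc mmean (tInter A B) = mmean (C + (tInter A B).filter (fun x => ¬ M ≤ x)) := by
            rw [hsplit]
        _ ≤ mmean C := mmean_add_le _ _ M hCne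
            (fun x hx => le_of_not_ge (Multiset.mem_filter.mp hx).2)
            (fun x hx => (Multiset.mem_filter.mp hx).2)
    have h2 : mmean C ≤ mmean (tUnion A B) := by
      have hsplit : (tUnion A B).filter (fun x => x ≤ m)
          + (tUnion A B).filter (fun x => ¬ x ≤ m) = tUnion A B :=
        Multiset.filter_add_not _ _
      rw [hCeq]
      calc mmean ((tUnion A B).filter (fun x => x ≤ m))
          ≤ mmean ((tUnion A B).filter (fun x => x ≤ m)
              + (tUnion A B).filter (fun x => ¬ x ≤ m)) := by
            apply le_mmean_add _ _ m (by rw [← hCeq]; exact hCne)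
              (fun x hx => le_of_not_ge (Multiset.mem_filter.mp hx).2)
              (fun x hx => (Multiset.mem_filter.mp hx).2)
        _ = mmean (tUnion A B) := by rw [hsplit]
    exact le_trans h1 h2
end

section
/- For hesitant fuzzy elements A₁ and A₂ with Torra union A₁ ∪ A₂: writing sequences in descending order, for each i ∈ {1,2}, the j-th largest element of A₁ ∪ A₂ is at least the j-th largest element of A_i for all j up to min(|A_i|, |A₁ ∪ A₂|) (so A_i ⊂_s (A₁ ∪ A₂) or A_i ⊂_t (A₁ ∪ A₂)). -/
/-!
The Torra union `U` of `A₁` and `A₂` consists of elements `≥ m := max (inf A₁) (inf A₂)` and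
contains every element of `Aᵢ` that is `≥ m`. In a descending list, `c ≤ l[j]` holds exactly when
at least `j + 1` entries are `≥ c`. So if the `j`-th largest element `c` of `Aᵢ` is `≥ m`, the
`j + 1` elements of `Aᵢ` that are `≥ c` all lie in `U`; and if `c < m`, then `c` lies below every
element of `U`.
-/

namespace List

variable {α : Type*} [LinearOrder α] {l : List α}

theorem SortedGE.le_getElem_iff_lt_countP (hl : l.SortedGE) {j : ℕ} (hj : j < l.length)
    (c : α) : c ≤ l[j] ↔ j < l.countP (c ≤ ·) := by
  constructor
  · intro hc
    have hprefix : (l.take (j + 1)).countP (c ≤ ·) = j + 1 := by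
      rw [countP_eq_length.mpr, length_take, min_eq_left hj]
      intro x hx
      obtain ⟨i, hi, rfl⟩ := mem_take_iff_getElem.mp hx
      simpa using hc.trans (hl.getElem_ge_getElem_of_le (by omega))
    calc j < j + 1 := j.lt_succ_self
      _ = (l.take (j + 1)).countP (c ≤ ·) := hprefix.symm
      _ ≤ l.countP (c ≤ ·) := (take_sublist _ _).countP_le
  · intro hlt
    by_contra! hjc
    have hsuffix : (l.drop j).countP (c ≤ ·) = 0 := by
      rw [countP_eq_zero]
      intro x hx
      obtain ⟨i, hi, rfl⟩ := mem_drop_iff_getElem.mp hx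
      simpa using (hl.getElem_ge_getElem_of_le (Nat.le_add_right j i)).trans_lt hjc
    have hsplit := countP_append (p := (c ≤ ·)) (l₁ := l.take j) (l₂ := l.drop j)
    rw [take_append_drop, hsuffix] at hsplit
    have hprefix := (l.take j).countP_le_length (p := (c ≤ ·))
    rw [length_take] at hprefix
    omega

end List

section dsort

variable {A : Multiset ℝ} {j : ℕ}

theorem coe_dsort (A : Multiset ℝ) : ((dsort A : List ℝ) : Multiset ℝ) = A := by
  simp [dsort]

theorem length_dsort (A : Multiset ℝ) : (dsort A).length = Multiset.card A := by
  simp [dsort]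

theorem sortedGE_dsort (A : Multiset ℝ) : (dsort A).SortedGE :=
  (Multiset.pairwise_sort A _).sortedLE.reverse

theorem getD_dsort_mem (hj : j < Multiset.card A) : (dsort A).getD j 0 ∈ A := by
  rw [← length_dsort] at hj
  rw [List.getD_eq_getElem _ _ hj]
  have hmem : (dsort A)[j] ∈ ((dsort A : List ℝ) : Multiset ℝ) := List.getElem_mem hj
  rwa [coe_dsort] at hmem

theorem le_getD_dsort_iff (hj : j < Multiset.card A) (c : ℝ) :
    c ≤ (dsort A).getD j 0 ↔ j < A.countP (c ≤ ·) := by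
  rw [← length_dsort] at hj
  rw [List.getD_eq_getElem _ _ hj, (sortedGE_dsort A).le_getElem_iff_lt_countP hj,
    ← Multiset.coe_countP, coe_dsort]

theorem getD_dsort_le_of_filter_le {V U : Multiset ℝ} {m : ℝ}
    (hVU : V.filter (m ≤ ·) ≤ U) (hU : ∀ x ∈ U, m ≤ x)
    (hjV : j < Multiset.card V) (hjU : j < Multiset.card U) :
    (dsort V).getD j 0 ≤ (dsort U).getD j 0 := by
  set c := (dsort V).getD j 0
  rcases le_or_gt m c with hmc | hcm
  · rw [le_getD_dsort_iff hjU]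
    calc j < V.countP (c ≤ ·) := (le_getD_dsort_iff hjV c).mp le_rfl
      _ = (V.filter (m ≤ ·)).countP (c ≤ ·) := by
        rw [Multiset.countP_filter]
        exact Multiset.countP_congr rfl fun x _ => by simpa using fun hcx => hmc.trans hcx
      _ ≤ U.countP (c ≤ ·) := Multiset.countP_le_of_le _ hVU
  · exact hcm.le.trans (hU _ (getD_dsort_mem hjU))

theorem subS_or_subT_of_getD_dsort_le {V U : Multiset ℝ}
    (h : ∀ j < min (Multiset.card V) (Multiset.card U), (dsort V).getD j 0 ≤ (dsort U).getD j 0) :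
    subS V U ∨ subT V U := by
  rcases le_or_gt (Multiset.card U) (Multiset.card V) with hUV | hVU
  · exact .inl ⟨hUV, fun i hi => h i (lt_min (hi.trans_le hUV) hi)⟩
  · exact .inr ⟨hVU, fun i hi => h i (lt_min hi (hi.trans hVU))⟩

end dsort

section tUnion

variable {A B : Multiset ℝ} {j : ℕ}

theorem le_of_mem_tUnion {x : ℝ} (hx : x ∈ tUnion A B) : max (minf A) (minf B) ≤ x :=
  (Multiset.mem_filter.mp hx).2

theorem filter_le_tUnion_left : A.filter (max (minf A) (minf B) ≤ ·) ≤ tUnion A B := by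
  rw [tUnion, Multiset.filter_add]
  exact Multiset.le_add_right _ _

theorem filter_le_tUnion_right : B.filter (max (minf A) (minf B) ≤ ·) ≤ tUnion A B := by
  rw [tUnion, Multiset.filter_add]
  exact Multiset.le_add_left _ _

theorem getD_dsort_le_tUnion_left (hj : j < min (Multiset.card A) (Multiset.card (tUnion A B))) :
    (dsort A).getD j 0 ≤ (dsort (tUnion A B)).getD j 0 :=
  getD_dsort_le_of_filter_le filter_le_tUnion_left (fun _ => le_of_mem_tUnion)
    (lt_min_iff.mp hj).1 (lt_min_iff.mp hj).2

theorem getD_dsort_le_tUnion_right (hj : j < min (Multiset.card B) (Multiset.card (tUnion A B))) :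
    (dsort B).getD j 0 ≤ (dsort (tUnion A B)).getD j 0 :=
  getD_dsort_le_of_filter_le filter_le_tUnion_right (fun _ => le_of_mem_tUnion)
    (lt_min_iff.mp hj).1 (lt_min_iff.mp hj).2

end tUnion

theorem stmt9_general (A₁ A₂ : Multiset ℝ) :
    (∀ j < min A₁.card (tUnion A₁ A₂).card,
      (dsort A₁).getD j 0 ≤ (dsort (tUnion A₁ A₂)).getD j 0) ∧
    (∀ j < min A₂.card (tUnion A₁ A₂).card,
      (dsort A₂).getD j 0 ≤ (dsort (tUnion A₁ A₂)).getD j 0) ∧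
    (subS A₁ (tUnion A₁ A₂) ∨ subT A₁ (tUnion A₁ A₂)) ∧
    (subS A₂ (tUnion A₁ A₂) ∨ subT A₂ (tUnion A₁ A₂)) := by
  have h₁ : ∀ j < min A₁.card (tUnion A₁ A₂).card,
      (dsort A₁).getD j 0 ≤ (dsort (tUnion A₁ A₂)).getD j 0 :=
    fun _ => getD_dsort_le_tUnion_left
  have h₂ : ∀ j < min A₂.card (tUnion A₁ A₂).card,
      (dsort A₂).getD j 0 ≤ (dsort (tUnion A₁ A₂)).getD j 0 :=
    fun _ => getD_dsort_le_tUnion_right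
  exact ⟨h₁, h₂, subS_or_subT_of_getD_dsort_le h₁, subS_or_subT_of_getD_dsort_le h₂⟩

theorem stmt9 (A₁ A₂ : Multiset ℝ) (hA₁ : A₁ ≠ 0) (hA₂ : A₂ ≠ 0)
    (hA₁1 : ∀ x ∈ A₁, x ∈ Set.Icc (0:ℝ) 1) (hA₂1 : ∀ x ∈ A₂, x ∈ Set.Icc (0:ℝ) 1) :
    (∀ j < min A₁.card (tUnion A₁ A₂).card,
      (dsort A₁).getD j 0 ≤ (dsort (tUnion A₁ A₂)).getD j 0) ∧
    (∀ j < min A₂.card (tUnion A₁ A₂).card,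
      (dsort A₂).getD j 0 ≤ (dsort (tUnion A₁ A₂)).getD j 0) ∧
    (subS A₁ (tUnion A₁ A₂) ∨ subT A₁ (tUnion A₁ A₂)) ∧
    (subS A₂ (tUnion A₁ A₂) ∨ subT A₂ (tUnion A₁ A₂)) :=
  stmt9_general A₁ A₂
end

section
/- If A ⊂_a B (sup A ≤ sup B and inf A ≤ inf B), then for any hesitant fuzzy element C, (A ∪ C) ⊂_a (B ∪ C) and (A ∩ C) ⊂_a (B ∩ C), where ∪ and ∩ are Torra union and intersection. -/
lemma torra_union_char (A C : Finset ℝ) (hA : A.Nonempty) (hC : C.Nonempty)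
    {S : Finset ℝ} (hS : S = (A ∪ C).filter (fun h => max (A.min' hA) (C.min' hC) ≤ h))
    (hne : S.Nonempty) :
    S.max' hne = max (A.max' hA) (C.max' hC) ∧
      S.min' hne = max (A.min' hA) (C.min' hC) := by
  subst hS
  have hmaxmem : max (A.max' hA) (C.max' hC) ∈ A ∪ C := by
    rcases max_cases (A.max' hA) (C.max' hC) with ⟨h, _⟩ | ⟨h, _⟩ <;> rw [h] <;>
      simp [Finset.max'_mem A hA, Finset.max'_mem C hC]
  have hminmem : max (A.min' hA) (C.min' hC) ∈ A ∪ C := by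
    rcases max_cases (A.min' hA) (C.min' hC) with ⟨h, _⟩ | ⟨h, _⟩ <;> rw [h] <;>
      simp [Finset.min'_mem A hA, Finset.min'_mem C hC]
  have hmaxS : max (A.max' hA) (C.max' hC) ∈
      (A ∪ C).filter (fun h => max (A.min' hA) (C.min' hC) ≤ h) := by
    refine Finset.mem_filter.mpr ⟨hmaxmem, ?_⟩
    exact max_le_max (Finset.min'_le A _ (Finset.max'_mem A hA)) (Finset.min'_le C _ (Finset.max'_mem C hC))
  have hminS : max (A.min' hA) (C.min' hC) ∈
      (A ∪ C).filter (fun h => max (A.min' hA) (C.min' hC) ≤ h) :=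
    Finset.mem_filter.mpr ⟨hminmem, le_refl _⟩
  constructor
  · apply le_antisymm
    · apply Finset.max'_le
      intro y hy
      rcases Finset.mem_union.mp (Finset.mem_filter.mp hy).1 with h | h
      · exact le_max_of_le_left (Finset.le_max' A y h)
      · exact le_max_of_le_right (Finset.le_max' C y h)
    · exact Finset.le_max' _ _ hmaxS
  · apply le_antisymm
    · exact Finset.min'_le _ _ hminS
    · apply Finset.le_min'
      intro y hy
      exact (Finset.mem_filter.mp hy).2

lemma torra_inter_char (A C : Finset ℝ) (hA : A.Nonempty) (hC : C.Nonempty)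
    {S : Finset ℝ} (hS : S = (A ∪ C).filter (fun h => h ≤ min (A.max' hA) (C.max' hC)))
    (hne : S.Nonempty) :
    S.max' hne = min (A.max' hA) (C.max' hC) ∧
      S.min' hne = min (A.min' hA) (C.min' hC) := by
  subst hS
  have hmaxmem : min (A.max' hA) (C.max' hC) ∈ A ∪ C := by
    rcases min_cases (A.max' hA) (C.max' hC) with ⟨h, _⟩ | ⟨h, _⟩ <;> rw [h] <;>
      simp [Finset.max'_mem A hA, Finset.max'_mem C hC]
  have hminmem : min (A.min' hA) (C.min' hC) ∈ A ∪ C := by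
    rcases min_cases (A.min' hA) (C.min' hC) with ⟨h, _⟩ | ⟨h, _⟩ <;> rw [h] <;>
      simp [Finset.min'_mem A hA, Finset.min'_mem C hC]
  have hmaxS : min (A.max' hA) (C.max' hC) ∈
      (A ∪ C).filter (fun h => h ≤ min (A.max' hA) (C.max' hC)) :=
    Finset.mem_filter.mpr ⟨hmaxmem, le_refl _⟩
  have hminS : min (A.min' hA) (C.min' hC) ∈
      (A ∪ C).filter (fun h => h ≤ min (A.max' hA) (C.max' hC)) := by
    refine Finset.mem_filter.mpr ⟨hminmem, ?_⟩
    exact min_le_min (Finset.min'_le A _ (Finset.max'_mem A hA)) (Finset.min'_le C _ (Finset.max'_mem C hC))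
  constructor
  · apply le_antisymm
    · apply Finset.max'_le
      intro y hy
      exact (Finset.mem_filter.mp hy).2
    · exact Finset.le_max' _ _ hmaxS
  · apply le_antisymm
    · exact Finset.min'_le _ _ hminS
    · apply Finset.le_min'
      intro y hy
      rcases Finset.mem_union.mp (Finset.mem_filter.mp hy).1 with h | h
      · exact min_le_of_left_le (Finset.min'_le A y h)
      · exact min_le_of_right_le (Finset.min'_le C y h)

theorem stmt12 (A B C : Finset ℝ) (hA : A.Nonempty) (hB : B.Nonempty) (hC : C.Nonempty)
    (hA1 : ∀ x ∈ A, x ∈ Set.Icc (0:ℝ) 1) (hB1 : ∀ x ∈ B, x ∈ Set.Icc (0:ℝ) 1)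
    (hC1 : ∀ x ∈ C, x ∈ Set.Icc (0:ℝ) 1)
    (ha : A.max' hA ≤ B.max' hB ∧ A.min' hA ≤ B.min' hB)
    (UAC UBC IAC IBC : Finset ℝ)
    (hUAC : UAC = (A ∪ C).filter (fun h => max (A.min' hA) (C.min' hC) ≤ h))
    (hUBC : UBC = (B ∪ C).filter (fun h => max (B.min' hB) (C.min' hC) ≤ h))
    (hIAC : IAC = (A ∪ C).filter (fun h => h ≤ min (A.max' hA) (C.max' hC)))
    (hIBC : IBC = (B ∪ C).filter (fun h => h ≤ min (B.max' hB) (C.max' hC)))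
    (hUACne : UAC.Nonempty) (hUBCne : UBC.Nonempty)
    (hIACne : IAC.Nonempty) (hIBCne : IBC.Nonempty) :
    (UAC.max' hUACne ≤ UBC.max' hUBCne ∧ UAC.min' hUACne ≤ UBC.min' hUBCne) ∧
    (IAC.max' hIACne ≤ IBC.max' hIBCne ∧ IAC.min' hIACne ≤ IBC.min' hIBCne) := by
  obtain ⟨hU1, hU2⟩ := torra_union_char A C hA hC hUAC hUACne
  obtain ⟨hU3, hU4⟩ := torra_union_char B C hB hC hUBC hUBCne
  obtain ⟨hI1, hI2⟩ := torra_inter_char A C hA hC hIAC hIACne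
  obtain ⟨hI3, hI4⟩ := torra_inter_char B C hB hC hIBC hIBCne
  rw [hU1, hU2, hU3, hU4, hI1, hI2, hI3, hI4]
  exact ⟨⟨max_le_max ha.1 le_rfl, max_le_max ha.2 le_rfl⟩,
         ⟨min_le_min ha.1 le_rfl, min_le_min ha.2 le_rfl⟩⟩
end
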